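/- arXiv:1709.03033 — 7 statements merged into one kernel-verified Lean document; each statement's English description precedes it below -/
import Mathlib

section
/- For real numbers p1, p2 in (0,1) and α, β in (0,1], we have 1 - (1 - p1·p2)^(αβ) ≤ (1 - (1 - p1)^α)·(1 - (1 - p2)^β). -/
/-- Key lemma: for `γ ∈ (0,1]`, `x ∈ [0,1]`, `y ∈ [0,1]`,
`1 - (1 - x*y)^γ ≤ y * (1 - (1-x)^γ)`, by concavity of `t ↦ t^γ`. -/
lemma aux_key {x y γ : ℝ} (hx0 : 0 ≤ x) (hx1 : x ≤ 1) (hy0 : 0 ≤ y) (hy1 : y ≤ 1)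
    (hγ0 : 0 ≤ γ) (hγ1 : γ ≤ 1) :
    1 - (1 - x * y) ^ γ ≤ y * (1 - (1 - x) ^ γ) := by
  have hc := (Real.concaveOn_rpow hγ0 hγ1).2
    (show (1:ℝ) ∈ Set.Ici 0 by simp) (show 1 - x ∈ Set.Ici 0 by simp [hx1])
    (show (0:ℝ) ≤ 1 - y by linarith) hy0 (show (1 - y) + y = 1 by ring)
  simp only [smul_eq_mul, Real.one_rpow] at hc
  have harg : (1 - y) * 1 + y * (1 - x) = 1 - x * y := by ring
  rw [harg] at hc
  linarith

theorem stmt_0 (p1 p2 α β : ℝ) (hp1 : p1 ∈ Set.Ioo (0:ℝ) 1) (hp2 : p2 ∈ Set.Ioo (0:ℝ) 1)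
    (hα : α ∈ Set.Ioc (0:ℝ) 1) (hβ : β ∈ Set.Ioc (0:ℝ) 1) :
    1 - (1 - p1 * p2) ^ (α * β) ≤ (1 - (1 - p1) ^ α) * (1 - (1 - p2) ^ β) := by
  obtain ⟨hp10, hp11⟩ := hp1
  obtain ⟨hp20, hp21⟩ := hp2
  obtain ⟨hα0, hα1⟩ := hα
  obtain ⟨hβ0, hβ1⟩ := hβ
  set x₁ : ℝ := 1 - (1 - p1) ^ α with hx₁
  have hx₁0 : 0 ≤ x₁ := by
    have : (1 - p1) ^ α ≤ 1 := Real.rpow_le_one (by linarith) (by linarith) hα0.le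
    simp [hx₁]; linarith
  have hx₁1 : x₁ ≤ 1 := by
    have : 0 ≤ (1 - p1) ^ α := Real.rpow_nonneg (by linarith) α
    simp [hx₁]; linarith
  -- step 1: (1 - p2 * x₁) ≤ (1 - p1*p2)^α  (lemma with x := p1, y := p2, γ := α)
  have step1 : 1 - p2 * x₁ ≤ (1 - p1 * p2) ^ α := by
    have h := aux_key hp10.le hp11.le hp20.le hp21.le hα0.le hα1
    rw [hx₁]; linarith
  have hbase0 : (0:ℝ) ≤ 1 - p2 * x₁ := by nlinarith
  -- step 2: raise to β
  have step2 : (1 - p2 * x₁) ^ β ≤ ((1 - p1 * p2) ^ α) ^ β :=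
    Real.rpow_le_rpow hbase0 step1 hβ0.le
  have hpow : ((1 - p1 * p2) ^ α) ^ β = (1 - p1 * p2) ^ (α * β) :=
    (Real.rpow_mul (show (0:ℝ) ≤ 1 - p1 * p2 by nlinarith) α β).symm
  -- step 3: lemma with x := p2, y := x₁, γ := β
  have step3 : 1 - (1 - p2 * x₁) ^ β ≤ x₁ * (1 - (1 - p2) ^ β) :=
    aux_key hp20.le hp21.le hx₁0 hx₁1 hβ0.le hβ1
  calc 1 - (1 - p1 * p2) ^ (α * β) = 1 - ((1 - p1 * p2) ^ α) ^ β := by rw [hpow]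
    _ ≤ 1 - (1 - p2 * x₁) ^ β := by linarith
    _ ≤ x₁ * (1 - (1 - p2) ^ β) := step3
    _ = (1 - (1 - p1) ^ α) * (1 - (1 - p2) ^ β) := by rw [hx₁]
end

section
/- Let q1, …, qm ∈ (0,1) and p1, …, pm ∈ (0,1) satisfy 1 - p_i ≥ (1 - q_i)^K for all i, where K ≥ 1 is a real number. Then 1 - ∏_i (1 - p_i) ≤ K · (1 - ∏_i (1 - q_i)). -/
theorem stmt_2 (m : ℕ) (hm : 0 < m) (p q : Fin m → ℝ) (K : ℝ) (hK : 1 ≤ K)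
    (hp : ∀ i, p i ∈ Set.Ioo (0:ℝ) 1) (hq : ∀ i, q i ∈ Set.Ioo (0:ℝ) 1)
    (h : ∀ i, 1 - p i ≥ (1 - q i) ^ K) :
    1 - ∏ i, (1 - p i) ≤ K * (1 - ∏ i, (1 - q i)) := by
  set Q := ∏ i, (1 - q i) with hQ
  have hQpos : 0 < Q := Finset.prod_pos fun i _ => by linarith [(hq i).2]
  have hQle : Q ≤ 1 := Finset.prod_le_one (fun i _ => by linarith [(hq i).2])
    (fun i _ => by linarith [(hq i).1])
  have h1 : Q ^ K ≤ ∏ i, (1 - p i) := by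
    rw [← Real.finset_prod_rpow _ _ (fun i _ => by linarith [(hq i).2]) K]
    exact Finset.prod_le_prod (fun i _ => Real.rpow_nonneg (by linarith [(hq i).2]) K)
      (fun i _ => h i)
  have hb : 1 + K * (Q - 1) ≤ Q ^ K := by
    have := one_add_mul_self_le_rpow_one_add (s := Q - 1) (by linarith) hK
    simpa using this
  nlinarith
end

section
/- Let F_1, …, F_m be events in a probability space with P(F_i) ≤ p^k for all i in some subset D_1 of size m̄ with P(F_i) = p^k exactly for i ∈ D_1, P(F_i) ≤ p^(k+1) for i ∉ D_1, and P(F_i ∩ F_j) ≤ p^(k+1) for all distinct i, j ∈ D_1, P(F_i ∩ F_j) ≤ p^(k+2) if i or j ∉ D_1. If 0 < p ≤ ε/m with 0 < ε < 1, then (1-ε)·m̄·p^k ≤ P(⋃_{i=1}^m F_i) ≤ (1+ε)·m̄·p^k. -/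
/-!
Union bound from above, Bonferroni's inequality from below. Since `m p ≤ ε`, the events outside
`D₁` add at most `m p^(k+1) ≤ ε p^k` to the union bound, and the fewer than `m̄ m` pairwise
intersections inside `D₁` cost at most `m̄ m p^(k+1) ≤ ε m̄ p^k` in Bonferroni's bound.
-/

open MeasureTheory Finset

section

variable {Ω ι : Type*} [MeasurableSpace Ω]

theorem sum_offDiag_add_sum_le_sum_offDiag_insert [DecidableEq ι] {s : Finset ι} {a : ι}
    (ha : a ∉ s) {g : ι × ι → ℝ} (hg : ∀ x, 0 ≤ g x) :
    ∑ x ∈ s.offDiag, g x + ∑ j ∈ s, g (a, j) ≤ ∑ x ∈ (insert a s).offDiag, g x := by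
  have hdisj : Disjoint s.offDiag ({a} ×ˢ s) := by
    simp only [disjoint_left, mem_offDiag, mem_product, mem_singleton]
    grind
  calc ∑ x ∈ s.offDiag, g x + ∑ j ∈ s, g (a, j)
      = ∑ x ∈ s.offDiag ∪ {a} ×ˢ s, g x := by
        rw [sum_union hdisj, singleton_product, sum_map]; rfl
    _ ≤ ∑ x ∈ (insert a s).offDiag, g x :=
        sum_le_sum_of_subset_of_nonneg (by rw [offDiag_insert ha]; exact subset_union_left)
          fun x _ _ ↦ hg x

-- Bonferroni over ordered pairs: every intersection is subtracted twice, which only weakens it.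
theorem measureReal_biUnion_finset_ge_sum_sub_sum_offDiag (μ : Measure Ω) [IsFiniteMeasure μ]
    [DecidableEq ι] {F : ι → Set Ω} (hF : ∀ i, MeasurableSet (F i)) (s : Finset ι) :
    ∑ i ∈ s, μ.real (F i) - ∑ x ∈ s.offDiag, μ.real (F x.1 ∩ F x.2) ≤
      μ.real (⋃ i ∈ s, F i) := by
  induction s using Finset.induction_on with
  | empty => simp
  | insert a s ha ih =>
    set B := ⋃ i ∈ s, F i
    have hunion : μ.real (F a ∪ B) + μ.real (F a ∩ B) = μ.real (F a) + μ.real B :=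
      measureReal_union_add_inter' (hF a) (measure_ne_top _ _) (measure_ne_top _ _)
    have hinter : μ.real (F a ∩ B) ≤ ∑ j ∈ s, μ.real (F a ∩ F j) := by
      rw [Set.inter_iUnion₂]
      exact measureReal_biUnion_finset_le s _
    have hpairs := sum_offDiag_add_sum_le_sum_offDiag_insert ha
      (g := fun x ↦ μ.real (F x.1 ∩ F x.2)) fun _ ↦ measureReal_nonneg
    rw [sum_insert ha, Finset.set_biUnion_insert]
    linarith

theorem card_mul_sub_card_offDiag_mul_le_measureReal_iUnion (μ : Measure Ω) [IsFiniteMeasure μ]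
    [DecidableEq ι] {F : ι → Set Ω} (hF : ∀ i, MeasurableSet (F i)) {D : Finset ι} {a b : ℝ}
    (hD : ∀ i ∈ D, a ≤ μ.real (F i))
    (hpair : ∀ i ∈ D, ∀ j ∈ D, i ≠ j → μ.real (F i ∩ F j) ≤ b) :
    #D * a - #D.offDiag * b ≤ μ.real (⋃ i, F i) := by
  have hsingles : #D * a ≤ ∑ i ∈ D, μ.real (F i) := by
    simpa using card_nsmul_le_sum D _ a hD
  have hpairs : ∑ x ∈ D.offDiag, μ.real (F x.1 ∩ F x.2) ≤ #D.offDiag * b := by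
    simpa using sum_le_card_nsmul D.offDiag _ b fun x hx ↦
      hpair x.1 (mem_offDiag.1 hx).1 x.2 (mem_offDiag.1 hx).2.1 (mem_offDiag.1 hx).2.2
  have hmono : μ.real (⋃ i ∈ D, F i) ≤ μ.real (⋃ i, F i) :=
    measureReal_mono (Set.iUnion₂_subset_iUnion _ _) (measure_ne_top _ _)
  linarith [measureReal_biUnion_finset_ge_sum_sub_sum_offDiag μ hF D]

theorem measureReal_iUnion_le_card_mul_add_card_compl_mul (μ : Measure Ω) [IsFiniteMeasure μ]
    [Fintype ι] [DecidableEq ι] {F : ι → Set Ω} {D : Finset ι} {a b : ℝ}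
    (hD : ∀ i ∈ D, μ.real (F i) ≤ a) (hDc : ∀ i ∉ D, μ.real (F i) ≤ b) :
    μ.real (⋃ i, F i) ≤ #D * a + #Dᶜ * b := by
  have hin : ∑ i ∈ D, μ.real (F i) ≤ #D * a := by simpa using sum_le_card_nsmul D _ a hD
  have hout : ∑ i ∈ Dᶜ, μ.real (F i) ≤ #Dᶜ * b := by
    simpa using sum_le_card_nsmul Dᶜ _ b fun i hi ↦ hDc i (mem_compl.1 hi)
  calc μ.real (⋃ i, F i) ≤ ∑ i, μ.real (F i) := measureReal_iUnion_fintype_le F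
    _ = ∑ i ∈ D, μ.real (F i) + ∑ i ∈ Dᶜ, μ.real (F i) := (sum_add_sum_compl D _).symm
    _ ≤ #D * a + #Dᶜ * b := add_le_add hin hout

end

theorem stmt_5_general {Ω : Type*} [MeasurableSpace Ω] (μ : Measure Ω) [IsProbabilityMeasure μ]
    (m : ℕ) (F : Fin m → Set Ω) (hF : ∀ i, MeasurableSet (F i))
    (D1 : Finset (Fin m)) (mbar k : ℕ) (hmbar : D1.card = mbar) (hmbar1 : 1 ≤ mbar)
    (p ε : ℝ) (hp0 : 0 < p) (hpm : p ≤ ε / m)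
    (hD1 : ∀ i ∈ D1, (μ (F i)).toReal = p ^ k)
    (hD1c : ∀ i ∉ D1, (μ (F i)).toReal ≤ p ^ (k + 1))
    (hpair : ∀ i ∈ D1, ∀ j ∈ D1, i ≠ j → (μ (F i ∩ F j)).toReal ≤ p ^ (k + 1)) :
    (1 - ε) * mbar * p ^ k ≤ (μ (⋃ i, F i)).toReal ∧
      (μ (⋃ i, F i)).toReal ≤ (1 + ε) * mbar * p ^ k := by
  have hmbar_le : mbar ≤ m := hmbar ▸ card_le_univ D1 |>.trans_eq (Fintype.card_fin m)
  have hmp : m * p ≤ ε := by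
    rwa [le_div_iff₀' (by exact_mod_cast hmbar1.trans hmbar_le)] at hpm
  have hoffDiag : (#D1.offDiag : ℝ) ≤ mbar * m := by
    rw [offDiag_card, hmbar]
    exact_mod_cast (Nat.sub_le _ _).trans (Nat.mul_le_mul_left _ hmbar_le)
  have hcompl : (#D1ᶜ : ℝ) ≤ m := by
    exact_mod_cast (card_le_univ D1ᶜ).trans_eq (Fintype.card_fin m)
  have hpk : 0 < p ^ k := pow_pos hp0 k
  have hmbar1' : (1 : ℝ) ≤ mbar := by exact_mod_cast hmbar1
  have hmpk : (m * p) * (mbar * p ^ k) ≤ ε * (mbar * p ^ k) := by gcongr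
  constructor
  · calc (1 - ε) * mbar * p ^ k ≤ mbar * p ^ k - (mbar * m) * p ^ (k + 1) := by
          rw [pow_succ]; linarith
      _ ≤ mbar * p ^ k - #D1.offDiag * p ^ (k + 1) := by gcongr
      _ ≤ μ.real (⋃ i, F i) := hmbar ▸ card_mul_sub_card_offDiag_mul_le_measureReal_iUnion μ hF
          (fun i hi ↦ (hD1 i hi).ge) hpair
  · have hε : 0 ≤ ε := (by positivity : (0 : ℝ) ≤ m * p).trans hmp
    calc μ.real (⋃ i, F i) ≤ mbar * p ^ k + #D1ᶜ * p ^ (k + 1) :=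
          hmbar ▸ measureReal_iUnion_le_card_mul_add_card_compl_mul μ
            (fun i hi ↦ (hD1 i hi).le) hD1c
      _ ≤ mbar * p ^ k + m * p ^ (k + 1) := by gcongr
      _ ≤ (1 + ε) * mbar * p ^ k := by
          rw [pow_succ]; nlinarith [mul_le_mul_of_nonneg_left hmbar1' (mul_nonneg hε hpk.le)]

theorem stmt_5 {Ω : Type*} [MeasurableSpace Ω] (μ : Measure Ω) [IsProbabilityMeasure μ]
    (m : ℕ) (hm : 0 < m) (F : Fin m → Set Ω) (hF : ∀ i, MeasurableSet (F i))
    (D1 : Finset (Fin m)) (mbar k : ℕ) (hmbar : D1.card = mbar) (hmbar1 : 1 ≤ mbar)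
    (p ε : ℝ) (hε : ε ∈ Set.Ioo (0:ℝ) 1) (hp0 : 0 < p) (hpm : p ≤ ε / m)
    (hD1 : ∀ i ∈ D1, (μ (F i)).toReal = p ^ k)
    (hD1c : ∀ i ∉ D1, (μ (F i)).toReal ≤ p ^ (k + 1))
    (hpair : ∀ i ∈ D1, ∀ j ∈ D1, i ≠ j → (μ (F i ∩ F j)).toReal ≤ p ^ (k + 1))
    (hpair' : ∀ i j : Fin m, i ≠ j → (i ∉ D1 ∨ j ∉ D1) →
      (μ (F i ∩ F j)).toReal ≤ p ^ (k + 2)) :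
    (1 - ε) * mbar * p ^ k ≤ (μ (⋃ i, F i)).toReal ∧
      (μ (⋃ i, F i)).toReal ≤ (1 + ε) * mbar * p ^ k :=
  stmt_5_general μ m F hF D1 mbar k hmbar hmbar1 p ε hp0 hpm hD1 hD1c hpair
end

section
/- Suppose a path consists of m nodes, node i fails exactly when all n_s distinct supply nodes in its supply set S_i fail, the sets S_i all have size n_s and are pairwise distinct, so |S_i ∪ S_j| ≥ n_s + 1 for i ≠ j, and supply nodes fail independently with probability p. If 0 < p ≤ 2ε/m with ε ∈ (0,1), then the path failure probability P(F) satisfies (1-ε)·m·p^{n_s} ≤ P(F) ≤ m·p^{n_s}. -/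
open scoped Classical

noncomputable def failPr {U : Type*} [Fintype U] (p : ℝ) (E : Finset U → Prop) : ℝ :=
  ∑ W : Finset U, if E W then p ^ W.card * (1 - p) ^ (Fintype.card U - W.card) else 0

lemma binom_one {U : Type*} [DecidableEq U] (s : Finset U) (p : ℝ) :
    ∑ t ∈ s.powerset, p ^ t.card * (1 - p) ^ (s.card - t.card) = 1 := by
  have h := Finset.prod_add (fun _ : U => p) (fun _ : U => 1 - p) s
  simp only [Finset.prod_const, add_sub_cancel, one_pow] at h
  conv_rhs => rw [h]
  apply Finset.sum_congr rfl
  intro t ht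
  rw [Finset.card_sdiff_of_subset (Finset.mem_powerset.mp ht)]

lemma failPr_unfold {U : Type*} [Fintype U] (p : ℝ) (E : Finset U → Prop)
    (inst : DecidablePred E) :
    failPr p E = ∑ W : Finset U,
      @ite ℝ (E W) (inst W) (p ^ W.card * (1 - p) ^ (Fintype.card U - W.card)) 0 :=
  Finset.sum_congr rfl fun W _ => by split_ifs <;> rfl

lemma failPr_subset {U : Type*} [Fintype U] (A : Finset U) (p : ℝ) :
    failPr p (fun W => A ⊆ W) = p ^ A.card := by
  classical
  have unfold : failPr p (fun W => A ⊆ W) = ∑ W ∈ Finset.univ.filter (fun W => A ⊆ W), p ^ W.card * (1 - p) ^ (Fintype.card U - W.card) := by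
    rw [failPr, Finset.sum_filter]
    exact Finset.sum_congr rfl (fun W _ => by split_ifs <;> rfl)
  rw [unfold]
  have key : ∑ W ∈ Finset.univ.filter (fun W => A ⊆ W),
      p ^ W.card * (1 - p) ^ (Fintype.card U - W.card)
      = ∑ t ∈ Aᶜ.powerset, p ^ A.card * (p ^ t.card * (1 - p) ^ (Aᶜ.card - t.card)) := by
    apply Finset.sum_nbij' (i := fun W => W \ A) (j := fun t => A ∪ t)
    · intro W hW
      simp only [Finset.mem_powerset]
      intro x hx
      simp only [Finset.mem_sdiff] at hx
      simp [Finset.mem_compl, hx.2]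
    · intro t ht
      simp [Finset.subset_union_left]
    · intro W hW
      simp only [Finset.mem_filter] at hW
      exact Finset.union_sdiff_of_subset hW.2
    · intro t ht
      simp only [Finset.mem_powerset] at ht
      rw [Finset.union_sdiff_left, Finset.sdiff_eq_self_iff_disjoint]
      exact Finset.disjoint_left.mpr (fun x hx => by
        have := ht hx; simp only [Finset.mem_compl] at this; exact this)
    · intro W hW
      simp only [Finset.mem_filter] at hW
      have h1 : (W \ A).card = W.card - A.card := Finset.card_sdiff_of_subset hW.2
      have h2 : A.card ≤ W.card := Finset.card_le_card hW.2
      have h3 : W.card ≤ Fintype.card U := Finset.card_le_univ W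
      rw [← mul_assoc, ← pow_add, Finset.card_compl, h1]
      congr 2 <;> omega
  rw [key, ← Finset.mul_sum, binom_one, mul_one]

lemma failPr_union_le {U : Type*} [Fintype U] {p : ℝ} (hp0 : 0 ≤ p) (hp1 : p ≤ 1)
    {ι : Type*} [Fintype ι] (S : ι → Finset U) :
    failPr p (fun W => ∃ i, S i ⊆ W) ≤ ∑ i, failPr p (fun W => S i ⊆ W) := by
  have hR : ∑ i, failPr p (fun W => S i ⊆ W) = ∑ W : Finset U, ∑ i : ι,
      @ite ℝ (S i ⊆ W) (Classical.propDecidable _)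
        (p ^ W.card * (1 - p) ^ (Fintype.card U - W.card)) 0 :=
    (Finset.sum_congr rfl fun i _ => failPr_unfold p _ _).trans Finset.sum_comm
  rw [hR, failPr_unfold p _ (fun W => Classical.propDecidable _)]
  apply Finset.sum_le_sum
  intro W _
  have hnn : ∀ j ∈ (Finset.univ : Finset ι),
      (0:ℝ) ≤ @ite ℝ (S j ⊆ W) (Classical.propDecidable _)
        (p ^ W.card * (1 - p) ^ (Fintype.card U - W.card)) 0 := by
    intro j _
    split_ifs
    · exact mul_nonneg (pow_nonneg hp0 _) (pow_nonneg (by linarith) _)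
    · exact le_rfl
  by_cases hE : ∃ i, S i ⊆ W
  · rw [if_pos hE]
    obtain ⟨i, hi⟩ := hE
    have := Finset.single_le_sum hnn (Finset.mem_univ i)
    rwa [if_pos hi] at this
  · rw [if_neg hE]
    exact Finset.sum_nonneg hnn

lemma failPr_union_ge {U : Type*} [Fintype U] {p : ℝ} (hp0 : 0 ≤ p) (hp1 : p ≤ 1)
    {ι : Type*} [Fintype ι] [DecidableEq ι] (S : ι → Finset U) :
    (∑ i, failPr p (fun W => S i ⊆ W))
      - (1/2) * ∑ ij ∈ (Finset.univ : Finset ι).offDiag,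
          failPr p (fun W => S ij.1 ∪ S ij.2 ⊆ W)
      ≤ failPr p (fun W => ∃ i, S i ⊆ W) := by
  have hR1 : ∑ i, failPr p (fun W => S i ⊆ W) = ∑ W : Finset U, ∑ i : ι,
      @ite ℝ (S i ⊆ W) (Classical.propDecidable _)
        (p ^ W.card * (1 - p) ^ (Fintype.card U - W.card)) 0 :=
    (Finset.sum_congr rfl fun i _ => failPr_unfold p _ _).trans Finset.sum_comm
  have hR2 : ∑ ij ∈ (Finset.univ : Finset ι).offDiag,
      failPr p (fun W => S ij.1 ∪ S ij.2 ⊆ W) = ∑ W : Finset U,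
      ∑ ij ∈ (Finset.univ : Finset ι).offDiag,
      @ite ℝ (S ij.1 ∪ S ij.2 ⊆ W) (Classical.propDecidable _)
        (p ^ W.card * (1 - p) ^ (Fintype.card U - W.card)) 0 :=
    (Finset.sum_congr rfl fun ij _ => failPr_unfold p _ _).trans Finset.sum_comm
  rw [hR1, hR2, failPr_unfold p _ (fun W => Classical.propDecidable _), Finset.mul_sum,
    ← Finset.sum_sub_distrib]
  apply Finset.sum_le_sum
  intro W _
  set w : ℝ := p ^ W.card * (1 - p) ^ (Fintype.card U - W.card) with hwdef
  have hw0 : (0:ℝ) ≤ w := mul_nonneg (pow_nonneg hp0 _) (pow_nonneg (by linarith) _)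
  set T : Finset ι := Finset.univ.filter (fun i => S i ⊆ W) with hT
  have h1 : (∑ i : ι, @ite ℝ (S i ⊆ W) (Classical.propDecidable _) w 0) = (T.card : ℝ) * w := by
    rw [show (∑ i : ι, @ite ℝ (S i ⊆ W) (Classical.propDecidable _) w 0)
        = ∑ i : ι, if S i ⊆ W then w else 0 from
      Finset.sum_congr rfl fun i _ => by split_ifs <;> rfl]
    rw [← Finset.sum_filter, Finset.sum_const, nsmul_eq_mul]
  have hset : Finset.univ.offDiag.filter (fun ij : ι × ι => S ij.1 ∪ S ij.2 ⊆ W) = T.offDiag := by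
    ext ⟨i, j⟩
    simp only [Finset.mem_filter, Finset.mem_offDiag, Finset.mem_univ, true_and, hT,
      Finset.union_subset_iff]
    tauto
  have h2 : (∑ ij ∈ (Finset.univ : Finset ι).offDiag,
      @ite ℝ (S ij.1 ∪ S ij.2 ⊆ W) (Classical.propDecidable _) w 0) = (T.offDiag.card : ℝ) * w := by
    rw [show (∑ ij ∈ (Finset.univ : Finset ι).offDiag,
        @ite ℝ (S ij.1 ∪ S ij.2 ⊆ W) (Classical.propDecidable _) w 0)
        = ∑ ij ∈ (Finset.univ : Finset ι).offDiag, if S ij.1 ∪ S ij.2 ⊆ W then w else 0 from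
      Finset.sum_congr rfl fun ij _ => by split_ifs <;> rfl]
    rw [← Finset.sum_filter, hset, Finset.sum_const, nsmul_eq_mul]
  rw [h1, h2, Finset.offDiag_card]
  set k := T.card with hk
  by_cases hE : ∃ i, S i ⊆ W
  · rw [if_pos hE]
    obtain ⟨i, hi⟩ := hE
    have hk1 : 1 ≤ k := Finset.card_pos.mpr ⟨i, by simp [hT, hi]⟩
    have hcast : ((k * k - k : ℕ) : ℝ) = (k:ℝ) * k - k := by
      have hle : k ≤ k * k := Nat.le_mul_of_pos_left k (by omega)
      push_cast [Nat.cast_sub hle]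
      ring
    rw [hcast]
    rcases Nat.lt_or_ge k 2 with hk2 | hk2
    · have hkeq : k = 1 := by omega
      rw [hkeq]
      push_cast
      ring_nf
      linarith
    · have hkR : (2:ℝ) ≤ k := by exact_mod_cast hk2
      nlinarith [mul_nonneg (mul_nonneg (by linarith : (0:ℝ) ≤ (k:ℝ) - 1)
        (by linarith : (0:ℝ) ≤ (k:ℝ) - 2)) hw0]
  · rw [if_neg hE]
    have hT0 : T = ∅ := by
      ext i
      simp only [hT, Finset.mem_filter, Finset.mem_univ, true_and, Finset.notMem_empty,
        iff_false]
      exact fun h => hE ⟨i, h⟩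
    rw [show k = 0 from by rw [hk, hT0]; rfl]
    simp

theorem stmt_7 {U : Type*} [Fintype U] (m ns : ℕ) (hm : 0 < m)
    (S : Fin m → Finset U) (hcard : ∀ i, (S i).card = ns)
    (hdist : Function.Injective S)
    (p ε : ℝ) (hε : ε ∈ Set.Ioo (0:ℝ) 1) (hp0 : 0 < p) (hp : p ≤ 2 * ε / m) :
    (1 - ε) * m * p ^ ns ≤ failPr p (fun W => ∃ i, S i ⊆ W) ∧
      failPr p (fun W => ∃ i, S i ⊆ W) ≤ m * p ^ ns := by
  obtain ⟨hε0, hε1⟩ := hε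
  have hmR : (1:ℝ) ≤ m := by exact_mod_cast hm
  have hpp : 0 < p ^ ns := pow_pos hp0 ns
  have hsum : ∑ i : Fin m, failPr p (fun W => S i ⊆ W) = m * p ^ ns := by
    simp only [failPr_subset, hcard]
    rw [Finset.sum_const, Finset.card_univ, Fintype.card_fin, nsmul_eq_mul]
  by_cases hm1 : m = 1
  · subst hm1
    have hE : failPr p (fun W : Finset U => ∃ i, S i ⊆ W) = p ^ ns := by
      rw [show (fun W : Finset U => ∃ i, S i ⊆ W) = (fun W => S 0 ⊆ W) from
        funext fun W => propext ⟨fun ⟨i, hi⟩ => by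
          have hi0 : i = 0 := Subsingleton.elim i 0
          rwa [hi0] at hi, fun h => ⟨0, h⟩⟩, failPr_subset, hcard]
    rw [hE]
    push_cast
    constructor <;> nlinarith
  · have hm2 : 2 ≤ m := by omega
    have hm2R : (2:ℝ) ≤ m := by exact_mod_cast hm2
    have hmpos : (0:ℝ) < m := by linarith
    have hp1 : p ≤ 1 := by
      have h : 2 * ε / (m:ℝ) ≤ ε := by
        rw [div_le_iff₀ hmpos]
        nlinarith
      linarith
    constructor
    · have key := failPr_union_ge hp0.le hp1 S
      rw [hsum] at key
      have hpair : ∑ ij ∈ (Finset.univ : Finset (Fin m)).offDiag,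
          failPr p (fun W => S ij.1 ∪ S ij.2 ⊆ W) ≤ ((m * m - m : ℕ) : ℝ) * p ^ (ns + 1) := by
        have hle : ∀ ij ∈ (Finset.univ : Finset (Fin m)).offDiag,
            failPr p (fun W => S ij.1 ∪ S ij.2 ⊆ W) ≤ p ^ (ns + 1) := by
          rintro ⟨i, j⟩ hij
          simp only [Finset.mem_offDiag] at hij
          rw [failPr_subset]
          apply pow_le_pow_of_le_one hp0.le hp1
          have hss : S i ⊂ S i ∪ S j := by
            refine Finset.ssubset_iff_subset_ne.mpr ⟨Finset.subset_union_left, ?_⟩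
            intro h
            have hji : S j ⊆ S i := by
              rw [h]; exact Finset.subset_union_right
            have heq := Finset.eq_of_subset_of_card_le hji (by rw [hcard, hcard])
            exact hij.2.2 (hdist heq.symm)
          have hlt := Finset.card_lt_card hss
          rw [hcard] at hlt
          exact hlt
        calc ∑ ij ∈ (Finset.univ : Finset (Fin m)).offDiag,
            failPr p (fun W => S ij.1 ∪ S ij.2 ⊆ W)
            ≤ ((Finset.univ : Finset (Fin m)).offDiag.card : ℝ) * p ^ (ns + 1) := by
              have h := Finset.sum_le_card_nsmul _ _ _ hle
              rwa [nsmul_eq_mul] at h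
          _ = ((m * m - m : ℕ) : ℝ) * p ^ (ns + 1) := by
              rw [Finset.offDiag_card, Finset.card_univ, Fintype.card_fin]
      have hcast : ((m * m - m : ℕ) : ℝ) = (m:ℝ) * m - m := by
        have hle : m ≤ m * m := Nat.le_mul_of_pos_left m hm
        push_cast [Nat.cast_sub hle]
        ring
      rw [hcast] at hpair
      have hmp : p * m ≤ 2 * ε := (le_div_iff₀ hmpos).mp hp
      have h3 : ((m:ℝ) - 1) * (p * m) ≤ ((m:ℝ) - 1) * (2 * ε) :=
        mul_le_mul_of_nonneg_left hmp (by linarith)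
      have h4 : ((m:ℝ) * m - m) * p ≤ 2 * ε * m := by nlinarith
      have h5 : (((m:ℝ) * m - m) * p) * p ^ ns ≤ (2 * ε * m) * p ^ ns :=
        mul_le_mul_of_nonneg_right h4 hpp.le
      have hfinal : (1 - ε) * m * p ^ ns
          ≤ (m:ℝ) * p ^ ns - (1/2) * (((m:ℝ) * m - m) * p ^ (ns + 1)) := by
        rw [pow_succ]
        nlinarith [h5]
      calc (1 - ε) * m * p ^ ns
          ≤ (m:ℝ) * p ^ ns - (1/2) * (((m:ℝ) * m - m) * p ^ (ns + 1)) := hfinal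
        _ ≤ (m:ℝ) * p ^ ns - (1/2) * ∑ ij ∈ (Finset.univ : Finset (Fin m)).offDiag,
            failPr p (fun W => S ij.1 ∪ S ij.2 ⊆ W) := by linarith [hpair]
        _ ≤ failPr p (fun W => ∃ i, S i ⊆ W) := key
    · have h := failPr_union_le hp0.le hp1 S
      rwa [hsum] at h
end

section
/- Let p(v_i) = ∏_j p(u_j) over the n ≤ n_s supply nodes u_j of v_i with p(u_j) ∈ (0,1), and let p̃(v_i) = ∏_j p̃(u_j) where p̃(u_j) ≥ 1 - (1 - p(u_j))^{1/n_d} with n_d ≥ 1 an integer. Then 1 - p(v_i) ≥ (1 - p̃(v_i))^{n_d^{n_s}}. -/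
open Real

lemma lemA (u v a : ℝ) (hu0 : 0 ≤ u) (hv0 : 0 ≤ v) (hv1 : v ≤ 1)
    (ha : 1 ≤ a) : (u + v - u*v) ^ a ≤ u ^ a * (1 - v) + v := by
  have h := (convexOn_rpow ha).2 (Set.mem_Ici.2 hu0) (Set.mem_Ici.2 zero_le_one)
    (show (0:ℝ) ≤ 1 - v by linarith) hv0 (by ring)
  simp only [smul_eq_mul, Real.one_rpow, mul_one] at h
  calc (u + v - u*v) ^ a = ((1-v)*u + v) ^ a := by ring_nf
    _ ≤ (1-v)*u^a + v := h
    _ = u ^ a * (1 - v) + v := by ring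

lemma lemB (u v a b : ℝ) (hu0 : 0 ≤ u) (hu1 : u ≤ 1) (hv0 : 0 ≤ v) (hv1 : v ≤ 1)
    (ha : 1 ≤ a) (hb : 1 ≤ b) :
    (u + v - u*v) ^ (a*b) ≤ u^a + v^b - u^a * v^b := by
  have h0 : (0:ℝ) ≤ u + v - u*v := by nlinarith
  have hU0 : (0:ℝ) ≤ u ^ a := Real.rpow_nonneg hu0 a
  have hU1 : u ^ a ≤ 1 := Real.rpow_le_one hu0 hu1 (by linarith)
  calc (u + v - u*v) ^ (a*b) = ((u + v - u*v) ^ a) ^ b := Real.rpow_mul h0 a b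
    _ ≤ (u ^ a * (1 - v) + v) ^ b := by
        apply Real.rpow_le_rpow (Real.rpow_nonneg h0 a)
          (lemA u v a hu0 hv0 hv1 ha) (by linarith)
    _ = (v + u^a - v * (u^a)) ^ b := by ring_nf
    _ ≤ v ^ b * (1 - u^a) + u^a := lemA v (u^a) b hv0 hU0 hU1 hb
    _ = u^a + v^b - u^a * v^b := by ring

lemma aux14 (nd : ℕ) (hnd : 1 ≤ nd) :
    ∀ n (p ptil : Fin n → ℝ), (∀ j, p j ∈ Set.Ioo (0:ℝ) 1) →
    (∀ j, ptil j ≤ 1) → (∀ j, ptil j ≥ 1 - (1 - p j) ^ ((1:ℝ) / nd)) →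
    (1 - ∏ j, ptil j) ^ (((nd:ℝ) ^ n : ℝ)) ≤ 1 - ∏ j, p j := by
  have hnd1 : (1:ℝ) ≤ (nd:ℝ) := by exact_mod_cast hnd
  intro n
  induction n with
  | zero =>
      intro p ptil hp hle hge
      simp
  | succ n ih =>
      intro p ptil hp hle hge
      have hptilpos : ∀ j, 0 < ptil j := by
        intro j
        have h1 : 1 - p j < 1 := by have := (hp j).1; linarith
        have h2 : 0 ≤ 1 - p j := by have := (hp j).2; linarith
        have : (1 - p j) ^ ((1:ℝ)/nd) < 1 :=
          Real.rpow_lt_one h2 h1 (by positivity)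
        have := hge j; linarith
      rw [Fin.prod_univ_succ p, Fin.prod_univ_succ ptil]
      set t := ptil 0 with ht
      set q := p 0 with hq
      set T := ∏ i : Fin n, ptil i.succ with hT
      set P := ∏ i : Fin n, p i.succ with hP
      have hIH : (1 - T) ^ (((nd:ℝ) ^ n : ℝ)) ≤ 1 - P :=
        ih (fun i => p i.succ) (fun i => ptil i.succ)
          (fun i => hp i.succ) (fun i => hle i.succ) (fun i => hge i.succ)
      have hT1 : T ≤ 1 := Finset.prod_le_one
        (fun i _ => (hptilpos i.succ).le) (fun i _ => hle i.succ)
      have hT0 : 0 < T := Finset.prod_pos (fun i _ => hptilpos i.succ)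
      have hP1 : P ≤ 1 := Finset.prod_le_one
        (fun i _ => (hp i.succ).1.le) (fun i _ => (hp i.succ).2.le)
      have hP0 : 0 < P := Finset.prod_pos (fun i _ => (hp i.succ).1)
      -- u = 1 - t, v = 1 - T
      have hu0 : 0 ≤ 1 - t := by have := hle 0; linarith
      have hu1 : 1 - t ≤ 1 := by have := hptilpos 0; linarith
      have hv0 : 0 ≤ 1 - T := by linarith
      have hv1 : 1 - T ≤ 1 := by linarith
      have hq0 : 0 < q := (hp 0).1
      have hq1 : q < 1 := (hp 0).2
      -- (1-t)^nd ≤ 1 - q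
      have hund : (1 - t : ℝ) ^ ((nd:ℝ)) ≤ 1 - q := by
        have h1 : (1 - t : ℝ) ≤ (1 - q) ^ ((1:ℝ)/nd) := by
          have := hge 0; linarith
        have h2 : (1 - t : ℝ) ^ ((nd:ℝ)) ≤ ((1 - q) ^ ((1:ℝ)/nd)) ^ ((nd:ℝ)) :=
          Real.rpow_le_rpow hu0 h1 (by linarith)
        have h3 : ((1 - q) ^ ((1:ℝ)/nd)) ^ ((nd:ℝ)) = 1 - q := by
          rw [← Real.rpow_mul (by linarith), one_div,
            inv_mul_cancel₀ (by positivity : ((nd:ℝ)) ≠ 0), Real.rpow_one]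
        rwa [h3] at h2
      have hMb : (1:ℝ) ≤ (nd:ℝ) ^ n := one_le_pow₀ hnd1
      have key : (1 - t*T) ^ (((nd:ℝ) * (nd:ℝ)^n : ℝ)) ≤ 1 - q*P := by
        have heq : 1 - t*T = (1-t) + (1-T) - (1-t)*(1-T) := by ring
        rw [heq]
        calc ((1-t) + (1-T) - (1-t)*(1-T)) ^ (((nd:ℝ) * (nd:ℝ)^n : ℝ))
            ≤ (1-t)^((nd:ℝ)) + (1-T)^(((nd:ℝ)^n:ℝ))
              - (1-t)^((nd:ℝ)) * (1-T)^(((nd:ℝ)^n:ℝ)) :=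
              lemB (1-t) (1-T) (nd:ℝ) ((nd:ℝ)^n) hu0 hu1 hv0 hv1 hnd1 hMb
          _ ≤ (1-q) + (1-P) - (1-q)*(1-P) := by
              have hx0 : 0 ≤ (1-t:ℝ)^((nd:ℝ)) := Real.rpow_nonneg hu0 _
              have hy0 : 0 ≤ (1-T:ℝ)^(((nd:ℝ)^n:ℝ)) := Real.rpow_nonneg hv0 _
              nlinarith [mul_nonneg hx0 hy0]
          _ = 1 - q*P := by ring
      have : ((nd:ℝ) ^ (n+1) : ℝ) = (nd:ℝ) * (nd:ℝ)^n := by ring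
      rw [this]
      exact key

theorem stmt_14 (n nd ns : ℕ) (hn : n ≤ ns) (hnd : 1 ≤ nd)
    (p ptil : Fin n → ℝ) (hp : ∀ j, p j ∈ Set.Ioo (0:ℝ) 1)
    (hptil_le : ∀ j, ptil j ≤ 1)
    (hptil : ∀ j, ptil j ≥ 1 - (1 - p j) ^ ((1:ℝ) / nd)) :
    1 - ∏ j, p j ≥ (1 - ∏ j, ptil j) ^ (((nd : ℝ) ^ ns : ℝ)) := by
  have hnd1 : (1:ℝ) ≤ (nd:ℝ) := by exact_mod_cast hnd
  have haux := aux14 nd hnd n p ptil hp hptil_le hptil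
  have hptilpos : ∀ j, 0 < ptil j := by
    intro j
    have h1 : 1 - p j < 1 := by have := (hp j).1; linarith
    have h2 : 0 ≤ 1 - p j := by have := (hp j).2; linarith
    have : (1 - p j) ^ ((1:ℝ)/nd) < 1 := Real.rpow_lt_one h2 h1 (by positivity)
    have := hptil j; linarith
  have hB1 : (∏ j, ptil j) ≤ 1 := Finset.prod_le_one
    (fun i _ => (hptilpos i).le) (fun i _ => hptil_le i)
  have hB0 : 0 ≤ 1 - ∏ j, ptil j := by linarith
  have hexp : ((nd:ℝ)^n : ℝ) ≤ (nd:ℝ)^ns := pow_le_pow_right₀ hnd1 hn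
  rcases eq_or_lt_of_le hB0 with h0 | h0
  · -- base is 0
    have hL : (1 - ∏ j, ptil j) ^ (((nd:ℝ)^ns : ℝ)) = 0 := by
      rw [← h0]; exact Real.zero_rpow (by positivity)
    rw [hL]
    have : (0:ℝ) ≤ (1 - ∏ j, ptil j) ^ (((nd:ℝ)^n : ℝ)) := Real.rpow_nonneg hB0 _
    linarith
  · have : (1 - ∏ j, ptil j) ^ (((nd:ℝ)^ns : ℝ))
        ≤ (1 - ∏ j, ptil j) ^ (((nd:ℝ)^n : ℝ)) :=
      Real.rpow_le_rpow_of_exponent_ge h0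
        (by
          have : (0:ℝ) ≤ ∏ j, ptil j :=
            Finset.prod_nonneg fun i _ => (hptilpos i).le
          linarith) hexp
    linarith
end

section
/- Let p_i, q_i ∈ (0,1) for i = 1,…,m satisfy 1 - p_i ≥ (1 - q_i)^{K} with K = n_d^{n_s} ≥ 1. Then (1 - ∏_i(1 - p_i)) / (1 - ∏_i(1 - q_i)) ≤ K, i.e., the upper bound 1 - ∏(1-p_i) on path failure probability is at most n_d^{n_s} times the lower bound 1 - ∏(1-q_i). -/
theorem stmt_15 (m : ℕ) (hm : 0 < m) (p q : Fin m → ℝ) (K : ℝ) (hK : 1 ≤ K)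
    (hp : ∀ i, p i ∈ Set.Ioo (0:ℝ) 1) (hq : ∀ i, q i ∈ Set.Ioo (0:ℝ) 1)
    (h : ∀ i, 1 - p i ≥ (1 - q i) ^ K) :
    (1 - ∏ i, (1 - p i)) / (1 - ∏ i, (1 - q i)) ≤ K := by
  have hq0 : ∀ i, (0:ℝ) < 1 - q i := fun i => by have := (hq i).2; linarith
  have hq1 : ∀ i, 1 - q i < 1 := fun i => by have := (hq i).1; linarith
  have hQpos : 0 < ∏ i, (1 - q i) := Finset.prod_pos fun i _ => hq0 i
  have hQlt : ∏ i, (1 - q i) < 1 := by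
    calc ∏ i, (1 - q i) < ∏ i, (1:ℝ) :=
          Finset.prod_lt_prod_of_nonempty (fun i _ => hq0 i) (fun i _ => hq1 i)
            ⟨⟨0, hm⟩, Finset.mem_univ _⟩
      _ = 1 := Finset.prod_const_one
  have hden : 0 < 1 - ∏ i, (1 - q i) := by linarith
  rw [div_le_iff₀ hden]
  -- ∏(1-p) ≥ (∏(1-q))^K
  have hprod : (∏ i, (1 - q i)) ^ K ≤ ∏ i, (1 - p i) := by
    rw [← Real.finset_prod_rpow _ _ (fun i _ => (hq0 i).le)]
    exact Finset.prod_le_prod (fun i _ => Real.rpow_nonneg (hq0 i).le K)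
      (fun i _ => h i)
  -- Bernoulli: 1 + K*(x-1) ≤ x^K
  have hbern : 1 + K * ((∏ i, (1 - q i)) - 1) ≤ (∏ i, (1 - q i)) ^ K := by
    have := one_add_mul_self_le_rpow_one_add (by linarith : (-1:ℝ) ≤ (∏ i, (1 - q i)) - 1) hK
    simpa using this
  nlinarith
end

section
/- Consider two paths P^1 (nodes v_1^1,…,v_{m1}^1) and P^2 (nodes v_1^2,…,v_{m2}^2), where node v fails iff all its supply nodes fail, supply nodes failing independently with probability p. Let d+1 = min over pairs (i,j) of |S_i^1 ∪ S_j^2|, let m̄ be the number of pairs (i,j) attaining |S_i^1 ∪ S_j^2| = d+1 with pairwise-distinct unions, and assume all other pairwise unions among distinct minimal pairs have size ≥ d+2, and unions involving a non-minimal pair have size ≥ d+3. If 0 < p ≤ ε/(m1·m2) with ε ∈ (0,1), then (1-ε)·m̄·p^{d+1} ≤ P(both paths fail) ≤ (1+ε)·m̄·p^{d+1}. -/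
/-!
Both paths fail iff some union `T = S_i^1 ∪ S_j^2` fails entirely, an event of probability
`p ^ #T`. The union bound over the distinct unions gives the upper estimate: the minimal ones
contribute `m̄ p^(d+1)`, the at most `m1 m2` others at most `p^(d+2)` each, and `m1 m2 p ≤ ε`.
For the lower estimate keep only the `m̄` minimal unions and apply the second Bonferroni
inequality: each of the fewer than `m̄ m1 m2` pairwise joint failures has probability at most
`p^(d+2)`.
-/

open scoped Classical

open Finset

section FailureProbability

variable {U : Type*} [Fintype U] {p : ℝ}

noncomputable def failWeight (p : ℝ) (W : Finset U) : ℝ :=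
  p ^ #W * (1 - p) ^ (Fintype.card U - #W)

lemma failWeight_nonneg (hp0 : 0 ≤ p) (hp1 : p ≤ 1) (W : Finset U) : 0 ≤ failWeight p W :=
  mul_nonneg (pow_nonneg hp0 _) (pow_nonneg (sub_nonneg.2 hp1) _)

lemma failPr_eq_sum_boole_mul (p : ℝ) (E : Finset U → Prop) [DecidablePred E] :
    failPr p E = ∑ W, (if E W then 1 else 0) * failWeight p W := by
  simp only [failPr, failWeight, boole_mul]
  congr!

lemma failPr_congr {E F : Finset U → Prop} (h : ∀ W, E W ↔ F W) : failPr p E = failPr p F := by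
  simp only [failPr, h]

lemma failPr_mono (hp0 : 0 ≤ p) (hp1 : p ≤ 1) {E F : Finset U → Prop} (h : ∀ W, E W → F W) :
    failPr p E ≤ failPr p F := by
  simp only [failPr_eq_sum_boole_mul]
  gcongr with W
  · exact failWeight_nonneg hp0 hp1 W
  · split_ifs <;> simp_all

/-- `∏ x, (p + [x ∉ T] (1 - p)) = p ^ #T`, expanded as a sum over the set of failed elements. -/
lemma failPr_subset_s18 [DecidableEq U] (p : ℝ) (T : Finset U) : failPr p (T ⊆ ·) = p ^ #T := by
  have hexp := Fintype.prod_add (fun _ : U => p) (fun x => if x ∈ T then 0 else 1 - p)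
  have hlhs : ∏ x : U, (p + if x ∈ T then 0 else 1 - p) = p ^ #T := by
    simp only [add_ite, add_zero, add_sub_cancel, prod_ite_mem, univ_inter, prod_const]
  rw [hlhs] at hexp
  rw [hexp, failPr]
  refine sum_congr rfl fun W _ => ?_
  split_ifs with hTW
  · have hfactor : ∀ x ∈ Wᶜ, (if x ∈ T then 0 else 1 - p) = 1 - p :=
      fun x hx => if_neg fun hxT => mem_compl.1 hx (hTW hxT)
    rw [prod_const, prod_congr rfl hfactor, prod_const, card_compl]
  · obtain ⟨x, hxT, hxW⟩ := not_subset.1 hTW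
    rw [prod_eq_zero (mem_compl.2 hxW) (if_pos hxT : (if x ∈ T then (0 : ℝ) else 1 - p) = 0),
      mul_zero]

lemma sum_failPr_eq_sum_card_filter_mul {ι : Type*} (s : Finset ι) (E : ι → Finset U → Prop)
    [∀ W, DecidablePred (E · W)] :
    ∑ k ∈ s, failPr p (E k) = ∑ W, (#(s.filter (E · W)) : ℝ) * failWeight p W := by
  simp only [failPr_eq_sum_boole_mul]
  rw [sum_comm]
  simp only [← sum_mul, sum_boole]

lemma boole_exists_le_card_filter {ι : Type*} (s : Finset ι) (P : ι → Prop) [DecidablePred P]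
    [Decidable (∃ k ∈ s, P k)] :
    (if ∃ k ∈ s, P k then 1 else 0 : ℝ) ≤ #(s.filter P) := by
  split_ifs with h
  · obtain ⟨k, hk, hPk⟩ := h
    exact_mod_cast card_pos.2 ⟨k, mem_filter.2 ⟨hk, hPk⟩⟩
  · positivity

/-- With `a` of the events occurring, `a - a (a - 1) ≤ [a ≠ 0]` since `(a - 1)² ≥ 0`. -/
lemma card_filter_sub_card_filter_offDiag_le_boole {ι : Type*} (s : Finset ι) (P : ι → Prop)
    [DecidablePred P] [DecidablePred fun q : ι × ι => P q.1 ∧ P q.2] [Decidable (∃ k ∈ s, P k)] :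
    (#(s.filter P) - #(s.offDiag.filter fun q => P q.1 ∧ P q.2) : ℝ)
      ≤ if ∃ k ∈ s, P k then 1 else 0 := by
  have hpairs : s.offDiag.filter (fun q => P q.1 ∧ P q.2) = (s.filter P).offDiag := by
    ext q
    simp only [mem_filter, mem_offDiag]
    tauto
  rw [hpairs, offDiag_card, Nat.cast_sub (Nat.le_mul_self _), Nat.cast_mul]
  split_ifs with h
  · nlinarith [sq_nonneg ((#(s.filter P) : ℝ) - 1)]
  · simp [filter_eq_empty_iff.2 fun k hk hPk => h ⟨k, hk, hPk⟩]

lemma failPr_exists_le_sum (hp0 : 0 ≤ p) (hp1 : p ≤ 1) {ι : Type*} (s : Finset ι)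
    (E : ι → Finset U → Prop) :
    failPr p (fun W => ∃ k ∈ s, E k W) ≤ ∑ k ∈ s, failPr p (E k) := by
  rw [sum_failPr_eq_sum_card_filter_mul, failPr_eq_sum_boole_mul]
  gcongr with W
  · exact failWeight_nonneg hp0 hp1 W
  · exact boole_exists_le_card_filter s (E · W)

/-- The second Bonferroni inequality. -/
lemma sum_failPr_sub_sum_offDiag_le_failPr (hp0 : 0 ≤ p) (hp1 : p ≤ 1) {ι : Type*}
    (s : Finset ι) (E : ι → Finset U → Prop) :
    ∑ k ∈ s, failPr p (E k) - ∑ q ∈ s.offDiag, failPr p (fun W => E q.1 W ∧ E q.2 W)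
      ≤ failPr p (fun W => ∃ k ∈ s, E k W) := by
  rw [sum_failPr_eq_sum_card_filter_mul, sum_failPr_eq_sum_card_filter_mul, ← sum_sub_distrib,
    failPr_eq_sum_boole_mul]
  gcongr with W
  rw [← sub_mul]
  gcongr
  · exact failWeight_nonneg hp0 hp1 W
  · exact card_filter_sub_card_filter_offDiag_le_boole s (E · W)

end FailureProbability

lemma sum_filter_card_eq_pow {U : Type*} {p : ℝ} (𝒯 : Finset (Finset U)) (n : ℕ) :
    ∑ T ∈ 𝒯.filter (#· = n), p ^ #T = #(𝒯.filter (#· = n)) * p ^ n := by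
  rw [sum_congr rfl fun T hT => by rw [(mem_filter.1 hT).2], sum_const, nsmul_eq_mul]

section MinimalCutSets

variable {U : Type*} [Fintype U] [DecidableEq U] {p ε : ℝ} (𝒯 : Finset (Finset U)) (d : ℕ)

lemma failPr_exists_subset_le_one_add_mul_pow (hp0 : 0 ≤ p) (hp1 : p ≤ 1)
    (hmin : ∀ T ∈ 𝒯, d + 1 ≤ #T) (hattain : 1 ≤ #(𝒯.filter (#· = d + 1)))
    (hε : #𝒯 * p ≤ ε) :
    failPr p (fun W => ∃ T ∈ 𝒯, T ⊆ W) ≤ (1 + ε) * #(𝒯.filter (#· = d + 1)) * p ^ (d + 1) := by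
  set 𝒯min := 𝒯.filter (#· = d + 1)
  have hminimal : ∑ T ∈ 𝒯min, p ^ #T = #𝒯min * p ^ (d + 1) := sum_filter_card_eq_pow 𝒯 (d + 1)
  have hrest : ∑ T ∈ 𝒯.filter (¬#· = d + 1), p ^ #T ≤ #𝒯 * p ^ (d + 2) := by
    refine (sum_le_card_nsmul _ _ (p ^ (d + 2)) fun T hT => ?_).trans ?_
    · obtain ⟨hT, hne⟩ := mem_filter.1 hT
      have := hmin T hT
      exact pow_le_pow_of_le_one hp0 hp1 (by omega : d + 2 ≤ #T)
    · rw [nsmul_eq_mul]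
      gcongr
      exact filter_subset _ _
  have hmbar : (1 : ℝ) ≤ #𝒯min := by exact_mod_cast hattain
  have hpd : 0 ≤ p ^ (d + 1) := pow_nonneg hp0 _
  have hε0 : 0 ≤ ε := (by positivity : (0 : ℝ) ≤ #𝒯 * p).trans hε
  calc failPr p (fun W => ∃ T ∈ 𝒯, T ⊆ W)
      ≤ ∑ T ∈ 𝒯, failPr p (T ⊆ ·) := failPr_exists_le_sum hp0 hp1 𝒯 fun T W => T ⊆ W
    _ = ∑ T ∈ 𝒯min, p ^ #T + ∑ T ∈ 𝒯.filter (¬#· = d + 1), p ^ #T := by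
      simp only [failPr_subset_s18]
      exact (sum_filter_add_sum_filter_not _ _ _).symm
    _ ≤ #𝒯min * p ^ (d + 1) + #𝒯 * p * p ^ (d + 1) := by
      rw [hminimal, mul_assoc, ← pow_succ']
      gcongr
    _ ≤ (1 + ε) * #𝒯min * p ^ (d + 1) := by
      linear_combination mul_le_mul_of_nonneg_right hε hpd
        + mul_le_mul_of_nonneg_left hmbar (mul_nonneg hε0 hpd)

lemma one_sub_mul_pow_le_failPr_exists_subset (hp0 : 0 ≤ p) (hp1 : p ≤ 1)
    (hpairs : ∀ T ∈ 𝒯, ∀ T' ∈ 𝒯, T ≠ T' → #T = d + 1 → #T' = d + 1 → d + 2 ≤ #(T ∪ T'))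
    (hε : #𝒯 * p ≤ ε) :
    (1 - ε) * #(𝒯.filter (#· = d + 1)) * p ^ (d + 1) ≤ failPr p (fun W => ∃ T ∈ 𝒯, T ⊆ W) := by
  set 𝒯min := 𝒯.filter (#· = d + 1)
  have hminimal : ∑ T ∈ 𝒯min, p ^ #T = #𝒯min * p ^ (d + 1) := sum_filter_card_eq_pow 𝒯 (d + 1)
  have hoverlaps : ∑ q ∈ 𝒯min.offDiag, p ^ #(q.1 ∪ q.2) ≤ #𝒯min * #𝒯 * p ^ (d + 2) := by
    refine (sum_le_card_nsmul _ _ (p ^ (d + 2)) fun q hq => ?_).trans ?_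
    · obtain ⟨h₁, h₂, hne⟩ := mem_offDiag.1 hq
      obtain ⟨h₁, hcard₁⟩ := mem_filter.1 h₁
      obtain ⟨h₂, hcard₂⟩ := mem_filter.1 h₂
      exact pow_le_pow_of_le_one hp0 hp1 (hpairs _ h₁ _ h₂ hne hcard₁ hcard₂)
    · rw [nsmul_eq_mul, offDiag_card]
      gcongr
      calc ((#𝒯min * #𝒯min - #𝒯min : ℕ) : ℝ) ≤ #𝒯min * #𝒯min := by exact_mod_cast Nat.sub_le _ _
        _ ≤ #𝒯min * #𝒯 := by gcongr; exact filter_subset _ _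
  have hpd : 0 ≤ #𝒯min * p ^ (d + 1) := by positivity
  calc (1 - ε) * #𝒯min * p ^ (d + 1)
      ≤ #𝒯min * p ^ (d + 1) - #𝒯min * #𝒯 * p ^ (d + 2) := by
        rw [pow_succ' p (d + 1)]
        linear_combination mul_le_mul_of_nonneg_right hε hpd
    _ ≤ ∑ T ∈ 𝒯min, failPr p (T ⊆ ·)
          - ∑ q ∈ 𝒯min.offDiag, failPr p (fun W => q.1 ⊆ W ∧ q.2 ⊆ W) := by
        simp only [← union_subset_iff, failPr_subset_s18, hminimal]
        linarith
    _ ≤ failPr p (fun W => ∃ T ∈ 𝒯min, T ⊆ W) :=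
        sum_failPr_sub_sum_offDiag_le_failPr hp0 hp1 𝒯min fun T W => T ⊆ W
    _ ≤ failPr p (fun W => ∃ T ∈ 𝒯, T ⊆ W) :=
        failPr_mono hp0 hp1 fun W ⟨T, hT, hTW⟩ => ⟨T, filter_subset _ _ hT, hTW⟩

end MinimalCutSets

theorem stmt_18_general {U : Type*} [Fintype U] [DecidableEq U] (m1 m2 : ℕ)
    (S1 : Fin m1 → Finset U) (S2 : Fin m2 → Finset U) (d mbar : ℕ)
    (hmin : ∀ i j, d + 1 ≤ (S1 i ∪ S2 j).card)
    (hattain : ∃ i j, (S1 i ∪ S2 j).card = d + 1)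
    (hmbar : mbar = (((Finset.univ : Finset (Fin m1 × Fin m2)).image
        (fun ij => S1 ij.1 ∪ S2 ij.2)).filter (fun T => T.card = d + 1)).card)
    (hminpairs : ∀ i j i' j', S1 i ∪ S2 j ≠ S1 i' ∪ S2 j' →
      (S1 i ∪ S2 j).card = d + 1 → (S1 i' ∪ S2 j').card = d + 1 →
      d + 2 ≤ ((S1 i ∪ S2 j) ∪ (S1 i' ∪ S2 j')).card)
    (p ε : ℝ) (hε : ε ∈ Set.Ioo (0:ℝ) 1) (hp0 : 0 < p) (hp : p ≤ ε / (m1 * m2)) :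
    (1 - ε) * mbar * p ^ (d + 1) ≤
        failPr p (fun W => ∃ i j, S1 i ∪ S2 j ⊆ W) ∧
      failPr p (fun W => ∃ i j, S1 i ∪ S2 j ⊆ W) ≤ (1 + ε) * mbar * p ^ (d + 1) := by
  set 𝒯 := (univ : Finset (Fin m1 × Fin m2)).image fun ij => S1 ij.1 ∪ S2 ij.2
  have hevent : failPr p (fun W => ∃ i j, S1 i ∪ S2 j ⊆ W) = failPr p (fun W => ∃ T ∈ 𝒯, T ⊆ W) :=
    failPr_congr fun W => by simp [𝒯]
  have hmin' : ∀ T ∈ 𝒯, d + 1 ≤ #T := by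
    simpa only [𝒯, forall_mem_image, mem_univ, forall_const, Prod.forall] using hmin
  have hpairs : ∀ T ∈ 𝒯, ∀ T' ∈ 𝒯, T ≠ T' → #T = d + 1 → #T' = d + 1 → d + 2 ≤ #(T ∪ T') := by
    simpa only [𝒯, forall_mem_image, mem_univ, forall_const, Prod.forall] using hminpairs
  have hattain' : 1 ≤ #(𝒯.filter (#· = d + 1)) := by
    obtain ⟨i, j, hij⟩ := hattain
    exact card_pos.2 ⟨_, mem_filter.2 ⟨mem_image_of_mem _ (mem_univ (i, j)), hij⟩⟩
  have hcard : 1 ≤ #𝒯 ∧ #𝒯 ≤ m1 * m2 :=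
    ⟨hattain'.trans (card_filter_le _ _), card_image_le.trans (by simp)⟩
  have hε' : #𝒯 * p ≤ ε := by
    have hm : (0 : ℝ) < m1 * m2 := by exact_mod_cast hcard.1.trans hcard.2
    calc (#𝒯 : ℝ) * p ≤ m1 * m2 * p := by gcongr; exact_mod_cast hcard.2
      _ ≤ ε := (le_div_iff₀' hm).1 hp
  have hp1 : p ≤ 1 :=
    (le_mul_of_one_le_left hp0.le (by exact_mod_cast hcard.1)).trans (hε'.trans hε.2.le)
  subst hmbar
  rw [hevent]
  exact ⟨one_sub_mul_pow_le_failPr_exists_subset 𝒯 d hp0.le hp1 hpairs hε',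
    failPr_exists_subset_le_one_add_mul_pow 𝒯 d hp0.le hp1 hmin' hattain' hε'⟩

theorem stmt_18 {U : Type*} [Fintype U] [DecidableEq U] (m1 m2 : ℕ)
    (hm1 : 0 < m1) (hm2 : 0 < m2)
    (S1 : Fin m1 → Finset U) (S2 : Fin m2 → Finset U) (d mbar : ℕ)
    (hmin : ∀ i j, d + 1 ≤ (S1 i ∪ S2 j).card)
    (hattain : ∃ i j, (S1 i ∪ S2 j).card = d + 1)
    (hmbar : mbar = (((Finset.univ : Finset (Fin m1 × Fin m2)).image
        (fun ij => S1 ij.1 ∪ S2 ij.2)).filter (fun T => T.card = d + 1)).card)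
    (hminpairs : ∀ i j i' j', S1 i ∪ S2 j ≠ S1 i' ∪ S2 j' →
      (S1 i ∪ S2 j).card = d + 1 → (S1 i' ∪ S2 j').card = d + 1 →
      d + 2 ≤ ((S1 i ∪ S2 j) ∪ (S1 i' ∪ S2 j')).card)
    (hnonmin : ∀ i j i' j', S1 i ∪ S2 j ≠ S1 i' ∪ S2 j' →
      (d + 2 ≤ (S1 i ∪ S2 j).card ∨ d + 2 ≤ (S1 i' ∪ S2 j').card) →
      d + 3 ≤ ((S1 i ∪ S2 j) ∪ (S1 i' ∪ S2 j')).card)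
    (p ε : ℝ) (hε : ε ∈ Set.Ioo (0:ℝ) 1) (hp0 : 0 < p) (hp : p ≤ ε / (m1 * m2)) :
    (1 - ε) * mbar * p ^ (d + 1) ≤
        failPr p (fun W => ∃ i j, S1 i ∪ S2 j ⊆ W) ∧
      failPr p (fun W => ∃ i j, S1 i ∪ S2 j ⊆ W) ≤ (1 + ε) * mbar * p ^ (d + 1) :=
  stmt_18_general m1 m2 S1 S2 d mbar hmin hattain hmbar hminpairs p ε hε hp0 hp
end
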